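/- arXiv:1712.08556 — 6 statements merged into one kernel-verified Lean document; each statement's English description precedes it below -/
import Mathlib

section
/- Let d ∈ ℕ, ℓ ≥ 0, and let f : ℝ^d → ℝ be a convex function such that f(x) ≤ ℓ·‖x‖ for every x ∈ ℝ^d. Then f is Lipschitz with constant ℓ, i.e. |f(x) − f(y)| ≤ ℓ·‖x − y‖ for all x, y ∈ ℝ^d. -/
theorem stmt_0 (d : ℕ) (ℓ : ℝ) (hℓ : 0 ≤ ℓ)
    (f : EuclideanSpace ℝ (Fin d) → ℝ)
    (hconv : ConvexOn ℝ Set.univ f)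
    (hbd : ∀ x, f x ≤ ℓ * ‖x‖) :
    ∀ x y, |f x - f y| ≤ ℓ * ‖x - y‖ := by
  have key : ∀ x y : EuclideanSpace ℝ (Fin d), f x - f y ≤ ℓ * ‖x - y‖ := by
    intro x y
    have hcy : 0 ≤ ℓ * ‖y‖ - f y := by linarith [hbd y]
    rw [sub_le_iff_le_add]
    have h : ∀ ε > (0:ℝ), f x ≤ ℓ * ‖x - y‖ + f y + ε := by
      intro ε hε
      set c := ℓ * ‖y‖ - f y with hc
      have hc0 : 0 ≤ c := hcy
      set lam := min 1 (ε / (c + 1)) with hlam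
      have hlam0 : 0 < lam := lt_min one_pos (div_pos hε (by linarith))
      have hlam1 : lam ≤ 1 := min_le_left _ _
      set z := y + lam⁻¹ • (x - y) with hz
      have hx : x = (1 - lam) • y + lam • z := by
        rw [hz, smul_add, smul_smul, mul_inv_cancel₀ hlam0.ne', one_smul]
        module
      have hcv := hconv.2 (Set.mem_univ y) (Set.mem_univ z)
        (by linarith : (0:ℝ) ≤ 1 - lam) hlam0.le (by ring)
      rw [← hx] at hcv
      simp only [smul_eq_mul] at hcv
      have hz_bd : f z ≤ ℓ * ‖y‖ + ℓ * (lam⁻¹ * ‖x - y‖) := by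
        calc f z ≤ ℓ * ‖z‖ := hbd z
        _ ≤ ℓ * (‖y‖ + lam⁻¹ * ‖x - y‖) := by
            apply mul_le_mul_of_nonneg_left _ hℓ
            calc ‖z‖ ≤ ‖y‖ + ‖lam⁻¹ • (x - y)‖ := norm_add_le _ _
            _ = ‖y‖ + lam⁻¹ * ‖x - y‖ := by
                rw [norm_smul, Real.norm_eq_abs, abs_of_pos (inv_pos.2 hlam0)]
        _ = _ := by ring
      have hstep : f x ≤ (1 - lam) * f y + lam * (ℓ * ‖y‖ + ℓ * (lam⁻¹ * ‖x - y‖)) := by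
        refine hcv.trans ?_
        nlinarith [hz_bd, hlam0.le]
      have hlamc : lam * c ≤ ε := by
        have h1 : lam ≤ ε / (c + 1) := min_le_right _ _
        calc lam * c ≤ (ε / (c + 1)) * c := by nlinarith
        _ ≤ ε := by
            rw [div_mul_eq_mul_div, div_le_iff₀ (by linarith)]
            nlinarith
      have hmul : lam * (ℓ * (lam⁻¹ * ‖x - y‖)) = ℓ * ‖x - y‖ := by
        field_simp
      nlinarith [hstep]
    refine le_of_forall_pos_le_add ?_
    intro ε hε
    linarith [h ε hε]
  intro x y
  rw [abs_sub_le_iff]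
  refine ⟨key x y, ?_⟩
  have := key y x
  rwa [norm_sub_rev] at this
end

section
/- Let d ∈ ℕ, ℓ ≥ 0, and let G : ℝ^d → ℝ be convex with |G(M)| ≤ ℓ·‖M‖ for all M ∈ ℝ^d. Then there exist sequences (a_j)_{j ∈ ℕ} in ℝ^d and (b_j)_{j ∈ ℕ} in ℝ such that (i) G(M) = sup_{j ∈ ℕ} ( ⟨a_j, M⟩ + b_j ) for every M ∈ ℝ^d, and (ii) for every L, M ∈ ℝ^d, lim_{t → +∞} (G(L + t·M) − G(L)) / t = sup_{j ∈ ℕ} ⟨a_j, M⟩ (both sides being finite real numbers). -/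
open Filter
open scoped RealInnerProductSpace

/-! A convex lower semicontinuous function is the supremum of countably many continuous affine
minorants `y ↦ ⟪a j, y⟫ + b j` (Hahn–Banach plus the Lindelöf property). The growth bound
`G ≤ ℓ‖·‖` forces `‖a j‖ ≤ ℓ`, so `S := ⨆ j, ⟪a j, M⟫` is finite. Every minorant lies below `G L`
at `L` and grows at rate `⟪a j, M⟫ ≤ S` along `M`, so `(G (L + t • M) - G L) / t ≤ S`; conversely
the `j`-th minorant at `L + t • M` bounds the quotient below by `⟪a j, M⟫ - O(1/t)`. -/

section

variable {E : Type*} [NormedAddCommGroup E] [InnerProductSpace ℝ E]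

theorem ConvexOn.exists_seq_inner_add_le_and_eq_iSup [CompleteSpace E]
    [HereditarilyLindelofSpace E] {G : E → ℝ} (hconv : ConvexOn ℝ Set.univ G)
    (hG : LowerSemicontinuous G) :
    ∃ (a : ℕ → E) (b : ℕ → ℝ),
      (∀ j y, ⟪a j, y⟫ + b j ≤ G y) ∧ ∀ y, G y = ⨆ j, ⟪a j, y⟫ + b j := by
  obtain ⟨l, c, hle, hsup⟩ := hconv.real_univ_sSup_of_nat_affine_eq hG
  refine ⟨fun j => (InnerProductSpace.toDual ℝ E).symm (l j), c, fun j y => ?_, fun y => ?_⟩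
  · simpa [InnerProductSpace.toDual_symm_apply] using hle j y
  · simpa [InnerProductSpace.toDual_symm_apply] using (congrFun hsup y).symm

theorem norm_le_of_forall_inner_add_le_mul_norm {ℓ : ℝ} (hℓ : 0 ≤ ℓ) {a : E} {b : ℝ}
    (h : ∀ y, ⟪a, y⟫ + b ≤ ℓ * ‖y‖) : ‖a‖ ≤ ℓ := by
  by_contra! hlt
  have hδ : 0 < ‖a‖ * (‖a‖ - ℓ) := mul_pos (hℓ.trans_lt hlt) (sub_pos.mpr hlt)
  set t := (|b| + 1) / (‖a‖ * (‖a‖ - ℓ))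
  have ht : 0 ≤ t := by positivity
  have htδ : t * (‖a‖ * (‖a‖ - ℓ)) = |b| + 1 := div_mul_cancel₀ _ hδ.ne'
  have hta := h (t • a)
  rw [real_inner_smul_right, real_inner_self_eq_norm_sq, norm_smul, Real.norm_of_nonneg ht] at hta
  nlinarith [neg_abs_le b]

theorem tendsto_div_atTop_iSup_inner_of_eq_iSup {ι : Type*} [Nonempty ι] {G : E → ℝ}
    {a : ι → E} {b : ι → ℝ} (hle : ∀ j y, ⟪a j, y⟫ + b j ≤ G y)
    (hsup : ∀ y, G y = ⨆ j, ⟪a j, y⟫ + b j) (L M : E)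
    (hM : BddAbove (Set.range fun j => ⟪a j, M⟫)) :
    Tendsto (fun t : ℝ => (G (L + t • M) - G L) / t) atTop (nhds (⨆ j, ⟪a j, M⟫)) := by
  set S := ⨆ j, ⟪a j, M⟫
  have hupper : ∀ t : ℝ, 0 < t → (G (L + t • M) - G L) / t ≤ S := by
    intro t ht
    have hG : G (L + t • M) ≤ G L + t * S := by
      rw [hsup (L + t • M)]
      refine ciSup_le fun j => ?_
      rw [inner_add_right, real_inner_smul_right]
      nlinarith [hle j L, le_ciSup hM j]
    rw [div_le_iff₀ ht]
    linarith
  have hlower : ∀ j, ∀ t : ℝ, 0 < t →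
      ⟪a j, M⟫ + (⟪a j, L⟫ + b j - G L) / t ≤ (G (L + t • M) - G L) / t := by
    intro j t ht
    calc ⟪a j, M⟫ + (⟪a j, L⟫ + b j - G L) / t = (⟪a j, L + t • M⟫ + b j - G L) / t := by
          rw [inner_add_right, real_inner_smul_right]
          field_simp
          ring
      _ ≤ (G (L + t • M) - G L) / t := by
          gcongr
          exact hle j _
  rw [tendsto_order]
  constructor
  · intro c hc
    obtain ⟨j, hj⟩ := exists_lt_of_lt_ciSup hc
    have hrem : Tendsto (fun t : ℝ => ⟪a j, M⟫ + (⟪a j, L⟫ + b j - G L) / t) atTop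
        (nhds ⟪a j, M⟫) := by
      simpa using (tendsto_const_nhds (x := ⟪a j, M⟫)).add
        ((tendsto_const_nhds (x := ⟪a j, L⟫ + b j - G L)).div_atTop tendsto_id)
    filter_upwards [hrem.eventually (eventually_gt_nhds hj), eventually_gt_atTop 0]
      with t hct ht
    exact hct.trans_le (hlower j t ht)
  · intro c hc
    filter_upwards [eventually_gt_atTop 0] with t ht
    exact (hupper t ht).trans_lt hc

end

theorem stmt_5 (d : ℕ) (ℓ : ℝ) (hℓ : 0 ≤ ℓ)
    (G : EuclideanSpace ℝ (Fin d) → ℝ)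
    (hconv : ConvexOn ℝ Set.univ G)
    (hbd : ∀ M, |G M| ≤ ℓ * ‖M‖) :
    ∃ (a : ℕ → EuclideanSpace ℝ (Fin d)) (b : ℕ → ℝ),
      (∀ M, G M = ⨆ j : ℕ, (⟪a j, M⟫ + b j)) ∧
      (∀ L M, Tendsto (fun t : ℝ => (G (L + t • M) - G L) / t) atTop
        (nhds (⨆ j : ℕ, ⟪a j, M⟫))) := by
  have hGc : Continuous G := continuousOn_univ.mp (hconv.continuousOn isOpen_univ)
  obtain ⟨a, b, hle, hsup⟩ :=
    hconv.exists_seq_inner_add_le_and_eq_iSup hGc.lowerSemicontinuous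
  have hslope : ∀ j, ‖a j‖ ≤ ℓ := fun j =>
    norm_le_of_forall_inner_add_le_mul_norm hℓ fun y =>
      (hle j y).trans ((le_abs_self _).trans (hbd y))
  refine ⟨a, b, hsup, fun L M => tendsto_div_atTop_iSup_inner_of_eq_iSup hle hsup L M ?_⟩
  refine ⟨ℓ * ‖M‖, ?_⟩
  rintro _ ⟨j, rfl⟩
  exact (real_inner_le_norm _ _).trans (mul_le_mul_of_nonneg_right (hslope j) (norm_nonneg M))
end

section
/- Let Ω ⊆ ℝ^n be Lebesgue measurable with 0 < |Ω| < ∞, let E be a finite-dimensional real normed space, let κ ≥ 1 and Q : E → ℝ satisfy κ⁻¹·‖M‖² ≤ Q(M) ≤ κ·‖M‖² for all M ∈ E. Let ψ : [0,1] → [0,∞) be nonincreasing and convex with ψ(1) = 0 and ψ(λ) > 0 for every λ ∈ [0,1). Fix α > 0, ε > 0 with α·ε ≤ 1, and let σ satisfy 0 < σ < sup_{λ ∈ (0,1)} [ 2·√(α·ψ(λ)) / ( √κ · (1 + 2·√(α·|Ω|·ψ(λ)/λ)) ) ]. Then there exists δ ∈ (0,1], depending only on α, κ, |Ω|, ψ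 and σ, with the following property: for every measurable v : Ω → ℝ with α·ε ≤ v(x) ≤ 1 for a.e. x, every measurable e : Ω → E with ∫_Ω v·Q(e) dx < ∞, and every Lebesgue-integrable f : Ω → ℝ with f(x) ≥ −σ·‖e(x)‖ for a.e. x, one has δ·W ≤ W + ∫_Ω f dx + 1, where W := ∫_Ω v·Q(e) dx + ε⁻¹·∫_Ω ψ(v) dx. (Equivalently, W ≤ δ⁻¹·( W + ∫_Ω f dx + 1 ), i.e. the Ambrosio–Tortorelli-type energy W is controlled by the total energy W + ∫ f plus a constant.) -/
/-!
Choose `l ∈ (0, 1)` realising the strict inequality for `σ`. Pointwise, `σ ‖e‖` is absorbed by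
AM-GM: where `v ≤ l`, monotonicity gives `ψ (v) ≥ ψ (l)` and `σ ‖e‖` is split between
`v Q(e)` and `ε⁻¹ ψ (v)`; where `v > l`, it is split between `v Q(e)` and a constant whose
integral over `Ω` is independent of `ε`. Integrating, `-∫ f` is at most a fraction `c < 1` of
the energy plus a constant `≤ 1`, and `δ = 1 - c` works.
-/

open MeasureTheory Filter Set

theorem le_add_of_sq_le_four_mul {x y b : ℝ} (hx : 0 ≤ x) (hy : 0 ≤ y)
    (h : b ^ 2 ≤ 4 * x * y) : b ≤ x + y := by
  nlinarith [sq_nonneg (x - y)]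

theorem exists_coercivity_constants_of_lt_iSup {ψ : ℝ → ℝ} {κ α V σ : ℝ}
    (hκ : 0 < κ) (hα : 0 < α) (hV : 0 ≤ V) (hσ0 : 0 < σ)
    (hψ : ∀ l ∈ Ioo (0:ℝ) 1, 0 < ψ l)
    (hσ : σ < ⨆ l : Ioo (0:ℝ) 1,
        2 * Real.sqrt (α * ψ l) / (Real.sqrt κ * (1 + 2 * Real.sqrt (α * V * ψ l / l)))) :
    ∃ l ∈ Ioo (0:ℝ) 1, ∃ s r : ℝ, 0 ≤ s ∧ 0 ≤ r ∧ s * (1 + 2 * r) < 1 ∧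
      σ ^ 2 * κ = 4 * s ^ 2 * α * ψ l ∧ r ^ 2 * l = α * V * ψ l := by
  have : Nonempty (Ioo (0:ℝ) 1) := ⟨⟨1 / 2, by norm_num⟩⟩
  obtain ⟨⟨l, hl⟩, hσl⟩ := exists_lt_of_lt_ciSup hσ
  have hψl : 0 < ψ l := hψ l hl
  refine ⟨l, hl, σ * √κ / (2 * √(α * ψ l)), √(α * V * ψ l / l),
    by positivity, by positivity, ?_, ?_, ?_⟩
  · rw [lt_div_iff₀ (by positivity)] at hσl
    rw [div_mul_eq_mul_div, div_lt_one (by positivity)]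
    linarith
  · rw [div_pow, mul_pow, mul_pow, Real.sq_sqrt hκ.le, Real.sq_sqrt (by positivity)]
    field_simp
    norm_num
  · rw [Real.sq_sqrt (by have := hl.1; positivity)]
    field_simp [hl.1.ne']

theorem mul_le_energy_density {ψ : ℝ → ℝ} (hψ : AntitoneOn ψ (Icc 0 1))
    (hψ0 : ∀ t ∈ Icc (0:ℝ) 1, 0 ≤ ψ t) {σ κ α V l s r ε w q a : ℝ}
    (hl : l ∈ Ioo (0:ℝ) 1) (hα : 0 < α) (hV : 0 < V) (hε : 0 < ε) (hs : 0 ≤ s) (hr : 0 ≤ r)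
    (hsσ : σ ^ 2 * κ = 4 * s ^ 2 * α * ψ l) (hrl : r ^ 2 * l = α * V * ψ l)
    (hw : α * ε ≤ w) (hw1 : w ≤ 1) (hq : 0 ≤ q) (ha : a ^ 2 ≤ κ * q) :
    σ * a ≤ s * (1 + 2 * r) * (w * q) + s * (ε⁻¹ * ψ w) + s * r / (2 * V) := by
  have hw0 : 0 ≤ w := (by positivity : 0 ≤ α * ε).trans hw
  have hψl : 0 ≤ ψ l := hψ0 l (Ioo_subset_Icc_self hl)
  have hψw : 0 ≤ ψ w := hψ0 w ⟨hw0, hw1⟩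
  have hσa : (σ * a) ^ 2 ≤ 4 * s ^ 2 * α * ψ l * q :=
    calc (σ * a) ^ 2 = σ ^ 2 * a ^ 2 := by ring
      _ ≤ σ ^ 2 * (κ * q) := by gcongr
      _ = 4 * s ^ 2 * α * ψ l * q := by rw [← mul_assoc, hsσ]
  rcases le_or_gt w l with hwl | hwl
  · have hαw : α ≤ w * ε⁻¹ := (le_mul_inv_iff₀ hε).2 hw
    have hψlw : ψ l ≤ ψ w := hψ ⟨hw0, hw1⟩ (Ioo_subset_Icc_self hl) hwl
    have key : σ * a ≤ s * (w * q) + s * (ε⁻¹ * ψ w) := by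
      refine le_add_of_sq_le_four_mul (by positivity) (by positivity) ?_
      calc (σ * a) ^ 2 ≤ 4 * s ^ 2 * α * ψ l * q := hσa
        _ ≤ 4 * s ^ 2 * (w * ε⁻¹) * ψ w * q := by gcongr
        _ = 4 * (s * (w * q)) * (s * (ε⁻¹ * ψ w)) := by ring
    have : 0 ≤ s * (2 * r) * (w * q) + s * r / (2 * V) := by positivity
    linarith
  · have key : σ * a ≤ s * (2 * r) * (w * q) + s * r / (2 * V) := by
      refine le_add_of_sq_le_four_mul (by positivity) (by positivity) ?_
      calc (σ * a) ^ 2 ≤ 4 * s ^ 2 * α * ψ l * q := hσa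
        _ = 4 * s ^ 2 * (r ^ 2 * l / V) * q := by rw [hrl]; field_simp
        _ ≤ 4 * s ^ 2 * (r ^ 2 * w / V) * q := by gcongr
        _ = 4 * (s * (2 * r) * (w * q)) * (s * r / (2 * V)) := by field_simp
    have : 0 ≤ s * (w * q) + s * (ε⁻¹ * ψ w) := by positivity
    linarith

theorem sub_mul_energy_le_energy_add_integral {X : Type*} [MeasurableSpace X] {μ : Measure X}
    [IsFiniteMeasure μ] {a b f : X → ℝ} {c s t : ℝ} (hsc : s ≤ c) (ht : t * μ.real univ ≤ 1)
    (ha : Integrable a μ) (hb : Integrable b μ) (hf : Integrable f μ)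
    (hb0 : ∀ᵐ x ∂μ, 0 ≤ b x) (hfab : ∀ᵐ x ∂μ, -(c * a x + s * b x + t) ≤ f x) :
    (1 - c) * ((∫ x, a x ∂μ) + ∫ x, b x ∂μ)
      ≤ ((∫ x, a x ∂μ) + ∫ x, b x ∂μ) + (∫ x, f x ∂μ) + 1 := by
  have hint : ∫ x, -(c * a x + s * b x + t) ∂μ ≤ ∫ x, f x ∂μ := integral_mono_ae
    (((ha.const_mul c).add (hb.const_mul s)).add (integrable_const t)).neg hf hfab
  rw [integral_neg, integral_add (f := fun x => c * a x + s * b x)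
    ((ha.const_mul c).add (hb.const_mul s)) (integrable_const t),
    integral_add (ha.const_mul c) (hb.const_mul s), integral_const_mul, integral_const_mul,
    integral_const, smul_eq_mul] at hint
  have hB : 0 ≤ ∫ x, b x ∂μ := integral_nonneg_of_ae hb0
  nlinarith [mul_nonneg (sub_nonneg.2 hsc) hB]

theorem stmt_6_general {n : ℕ} (Ω : Set (EuclideanSpace ℝ (Fin n)))
    (hΩpos : 0 < volume Ω) (hΩfin : volume Ω ≠ ⊤)
    {E : Type*} [NormedAddCommGroup E] [NormedSpace ℝ E]
    [MeasurableSpace E] [BorelSpace E]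
    (κ : ℝ) (hκ : 1 ≤ κ)
    (Q : E → ℝ) (hQ : ∀ M : E, κ⁻¹ * ‖M‖ ^ 2 ≤ Q M ∧ Q M ≤ κ * ‖M‖ ^ 2)
    (ψ : ℝ → ℝ)
    (hψmono : AntitoneOn ψ (Icc 0 1)) (hψnn : ∀ t ∈ Icc (0:ℝ) 1, 0 ≤ ψ t)
    (hψpos : ∀ l ∈ Ico (0:ℝ) 1, 0 < ψ l)
    (α : ℝ) (hα : 0 < α)
    (σ : ℝ) (hσ0 : 0 < σ)
    (hσ : σ < ⨆ l : Ioo (0:ℝ) 1,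
        2 * Real.sqrt (α * ψ l) /
          (Real.sqrt κ * (1 + 2 * Real.sqrt (α * (volume Ω).toReal * ψ l / l)))) :
    ∃ δ ∈ Ioc (0:ℝ) 1,
      ∀ ε : ℝ, 0 < ε → α * ε ≤ 1 →
      ∀ v : EuclideanSpace ℝ (Fin n) → ℝ, Measurable v →
        (∀ᵐ x ∂(volume.restrict Ω), α * ε ≤ v x ∧ v x ≤ 1) →
      ∀ e : EuclideanSpace ℝ (Fin n) → E, Measurable e →
        IntegrableOn (fun x => v x * Q (e x)) Ω →
        IntegrableOn (fun x => ψ (v x)) Ω →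
      ∀ f : EuclideanSpace ℝ (Fin n) → ℝ, IntegrableOn f Ω →
        (∀ᵐ x ∂(volume.restrict Ω), -σ * ‖e x‖ ≤ f x) →
        δ * ((∫ x in Ω, v x * Q (e x)) + ε⁻¹ * ∫ x in Ω, ψ (v x))
          ≤ ((∫ x in Ω, v x * Q (e x)) + ε⁻¹ * ∫ x in Ω, ψ (v x))
            + (∫ x in Ω, f x) + 1 := by
  have hκ0 : 0 < κ := one_pos.trans_le hκ
  have hV : 0 < (volume Ω).toReal := ENNReal.toReal_pos hΩpos.ne' hΩfin
  obtain ⟨l, hl, s, r, hs, hr, hsr, hsσ, hrl⟩ := exists_coercivity_constants_of_lt_iSup hκ0 hα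
    hV.le hσ0 (fun l hl => hψpos l (Ioo_subset_Ico_self hl)) hσ
  have hQ' (M : E) : 0 ≤ Q M ∧ ‖M‖ ^ 2 ≤ κ * Q M := by
    have := (inv_mul_le_iff₀ hκ0).1 (hQ M).1
    exact ⟨nonneg_of_mul_nonneg_right (this.trans' (sq_nonneg _)) hκ0, this⟩
  refine ⟨1 - s * (1 + 2 * r), ⟨by linarith, by nlinarith⟩, ?_⟩
  intro ε hε _ v _ hv e _ hvQ hψv f hf hfe
  have : IsFiniteMeasure (volume.restrict Ω) := isFiniteMeasure_restrict.2 hΩfin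
  rw [← integral_const_mul]
  refine sub_mul_energy_le_energy_add_integral (s := s) (t := s * r / (2 * (volume Ω).toReal))
    (by nlinarith) ?_ hvQ (hψv.const_mul _) hf ?_ ?_
  · rw [measureReal_restrict_apply_univ, measureReal_def]
    field_simp
    nlinarith
  · filter_upwards [hv] with x hvx
    exact mul_nonneg (by positivity) (hψnn _ ⟨(by positivity : 0 ≤ α * ε).trans hvx.1, hvx.2⟩)
  · filter_upwards [hv, hfe] with x hvx hfx
    have := mul_le_energy_density hψmono hψnn hl hα hV hε hs hr hsσ hrl hvx.1 hvx.2
      (hQ' (e x)).1 (hQ' (e x)).2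
    linarith

theorem stmt_6 {n : ℕ} (Ω : Set (EuclideanSpace ℝ (Fin n)))
    (hΩm : MeasurableSet Ω) (hΩpos : 0 < volume Ω) (hΩfin : volume Ω ≠ ⊤)
    {E : Type*} [NormedAddCommGroup E] [NormedSpace ℝ E] [FiniteDimensional ℝ E]
    [MeasurableSpace E] [BorelSpace E]
    (κ : ℝ) (hκ : 1 ≤ κ)
    (Q : E → ℝ) (hQ : ∀ M : E, κ⁻¹ * ‖M‖ ^ 2 ≤ Q M ∧ Q M ≤ κ * ‖M‖ ^ 2)
    (ψ : ℝ → ℝ)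
    (hψmono : AntitoneOn ψ (Icc 0 1)) (hψconv : ConvexOn ℝ (Icc 0 1) ψ)
    (hψ1 : ψ 1 = 0) (hψnn : ∀ t ∈ Icc (0:ℝ) 1, 0 ≤ ψ t)
    (hψpos : ∀ l ∈ Ico (0:ℝ) 1, 0 < ψ l)
    (α : ℝ) (hα : 0 < α)
    (σ : ℝ) (hσ0 : 0 < σ)
    (hσ : σ < ⨆ l : Ioo (0:ℝ) 1,
        2 * Real.sqrt (α * ψ l) /
          (Real.sqrt κ * (1 + 2 * Real.sqrt (α * (volume Ω).toReal * ψ l / l)))) :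
    ∃ δ ∈ Ioc (0:ℝ) 1,
      ∀ ε : ℝ, 0 < ε → α * ε ≤ 1 →
      ∀ v : EuclideanSpace ℝ (Fin n) → ℝ, Measurable v →
        (∀ᵐ x ∂(volume.restrict Ω), α * ε ≤ v x ∧ v x ≤ 1) →
      ∀ e : EuclideanSpace ℝ (Fin n) → E, Measurable e →
        IntegrableOn (fun x => v x * Q (e x)) Ω →
        IntegrableOn (fun x => ψ (v x)) Ω →
      ∀ f : EuclideanSpace ℝ (Fin n) → ℝ, IntegrableOn f Ω →
        (∀ᵐ x ∂(volume.restrict Ω), -σ * ‖e x‖ ≤ f x) →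
        δ * ((∫ x in Ω, v x * Q (e x)) + ε⁻¹ * ∫ x in Ω, ψ (v x))
          ≤ ((∫ x in Ω, v x * Q (e x)) + ε⁻¹ * ∫ x in Ω, ψ (v x))
            + (∫ x in Ω, f x) + 1 :=
  stmt_6_general Ω hΩpos hΩfin κ hκ Q hQ ψ hψmono hψnn hψpos α hα σ hσ0 hσ
end

section
/- Let Ω ⊆ ℝ^n be Lebesgue measurable with 0 < |Ω| < ∞, let E be a finite-dimensional real normed space, let κ ≥ 1 and Q : E → ℝ satisfy κ⁻¹·‖M‖² ≤ Q(M) ≤ κ·‖M‖² for all M ∈ E. Let ψ : [0,1] → [0,∞) be nonincreasing with ψ(1) = 0, fix α > 0 and ε > 0 with α·ε ≤ 1, and let v : Ω → ℝ be measurable with α·ε ≤ v(x) ≤ 1 a.e. and e : Ω → E measurable. Set W := ∫_Ω v·Q(e) dx + ε⁻¹·∫_Ω ψ(v) dx. Then for every λ ∈ (0,1) with ψ(λ) > 0 one has ∫_Ω ‖e(x)‖ dx ≤ √(κ·|Ω|/λ)·√W + ( √κ / (2·√(α·ψ(λ))) )·W. In particular, if W < ∞ then ‖e‖ is integrable on Ω.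 -/
/-!
Split `Ω` at the level `λ` of `v`. On `{λ < v}` the weight is at least `λ`, so `‖e‖² ≤ (κ/λ) v Q(e)`
and Cauchy–Schwarz bounds `∫ ‖e‖` by `√(κ |Ω| / λ) √W`. On `{v ≤ λ}` we have `v ≥ αε` and
`ψ(v) ≥ ψ(λ)`, and Young's inequality `r ≤ x r² + y` (for `4xy = 1`) gives the pointwise bound
`‖e‖ ≤ √κ / (2 √(α ψ(λ))) · (v Q(e) + ε⁻¹ ψ(v))`, which integrates to the second term.
Integrability is the first argument with `λ = αε` on all of `Ω`.
-/

open MeasureTheory Set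
open scoped ENNReal

theorem two_sqrt_mul_mul_le_mul_sq_add {x y : ℝ} (hx : 0 ≤ x) (hy : 0 ≤ y) (r : ℝ) :
    2 * √(x * y) * r ≤ x * r ^ 2 + y := by
  rw [Real.sqrt_mul hx]
  nlinarith [sq_nonneg (√x * r - √y), Real.sq_sqrt hx, Real.sq_sqrt hy]

theorem le_sqrt_div_two_sqrt_mul_mul_add {κ α ε p p' w q r : ℝ} (hκ : 0 < κ) (hα : 0 < α)
    (hε : 0 < ε) (hp : 0 < p) (hq : κ⁻¹ * r ^ 2 ≤ q) (hw : α * ε ≤ w) (hpp' : p ≤ p') :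
    r ≤ √κ / (2 * √(α * p)) * (w * q + ε⁻¹ * p') := by
  set C := √κ / (2 * √(α * p))
  -- Young's inequality with the weights chosen so that `2 √(x y) = 1`.
  have hC2 : C ^ 2 = κ / (4 * (α * p)) := by
    simp only [C, div_pow, mul_pow, Real.sq_sqrt hκ.le, Real.sq_sqrt (by positivity : 0 ≤ α * p)]
    ring
  have hprod : C * (α * ε * κ⁻¹) * (C * ε⁻¹ * p) = (1 / 2) ^ 2 := by
    rw [show C * (α * ε * κ⁻¹) * (C * ε⁻¹ * p) = C ^ 2 * (α * p) * κ⁻¹ * (ε * ε⁻¹) by ring, hC2]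
    field_simp
    norm_num
  have hxy : 2 * √(C * (α * ε * κ⁻¹) * (C * ε⁻¹ * p)) = 1 := by
    rw [hprod, Real.sqrt_sq (by norm_num)]
    norm_num
  calc r = 2 * √(C * (α * ε * κ⁻¹) * (C * ε⁻¹ * p)) * r := by rw [hxy, one_mul]
    _ ≤ C * (α * ε * κ⁻¹) * r ^ 2 + C * ε⁻¹ * p :=
      two_sqrt_mul_mul_le_mul_sq_add (by positivity) (by positivity) r
    _ = C * ((α * ε) * (κ⁻¹ * r ^ 2) + ε⁻¹ * p) := by ring
    _ ≤ C * (w * q + ε⁻¹ * p') := by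
      have hq0 : 0 ≤ q := le_trans (by positivity) hq
      have hw0 : 0 ≤ w := le_trans (by positivity) hw
      gcongr

section

variable {X : Type*} [MeasurableSpace X] {μ : Measure X}

theorem AntitoneOn.aemeasurable_comp {ψ : ℝ → ℝ} {a b : ℝ} (hab : a ≤ b)
    (hψ : AntitoneOn ψ (Icc a b)) {v : X → ℝ} (hv : Measurable v)
    (hv' : ∀ᵐ x ∂μ, v x ∈ Icc a b) : AEMeasurable (fun x => ψ (v x)) μ := by
  have hanti : Antitone fun t => ψ (projIcc a b hab t) := fun s t hst =>
    hψ (projIcc a b hab s).2 (projIcc a b hab t).2 (monotone_projIcc hab hst)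
  refine (hanti.measurable.comp hv).aemeasurable.congr ?_
  filter_upwards [hv'] with x hx
  simp [projIcc_of_mem hab hx]

theorem lintegral_le_sqrt_measure_univ_mul_sqrt_lintegral_sq (μ : Measure X) {g : X → ℝ≥0∞}
    (hg : AEMeasurable g μ) :
    ∫⁻ x, g x ∂μ ≤ (μ univ) ^ (1/2 : ℝ) * (∫⁻ x, g x ^ (2:ℝ) ∂μ) ^ (1/2 : ℝ) := by
  simpa using ENNReal.lintegral_mul_le_Lp_mul_Lq μ (Real.HolderConjugate.two_two)
    aemeasurable_const hg (f := fun _ => 1)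

variable {E : Type*} [NormedAddCommGroup E] {κ c : ℝ} {Q : E → ℝ} {v : X → ℝ} {e : X → E}

theorem lintegral_enorm_sq_le_of_le_weight (hκ : 0 < κ) (hQ : ∀ M, κ⁻¹ * ‖M‖ ^ 2 ≤ Q M)
    (hc : 0 < c) (hcv : ∀ᵐ x ∂μ, c ≤ v x) :
    ∫⁻ x, ‖e x‖ₑ ^ (2:ℝ) ∂μ ≤
      ENNReal.ofReal (κ / c) * ∫⁻ x, ENNReal.ofReal (v x * Q (e x)) ∂μ := by
  rw [← lintegral_const_mul' _ _ ENNReal.ofReal_ne_top]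
  refine lintegral_mono_ae (hcv.mono fun x hx => ?_)
  have hQx := hQ (e x)
  have hQx0 : 0 ≤ Q (e x) := le_trans (by positivity) hQx
  rw [← ofReal_norm, ENNReal.ofReal_rpow_of_nonneg (norm_nonneg _) zero_le_two,
    ← ENNReal.ofReal_mul (by positivity)]
  refine ENNReal.ofReal_le_ofReal ?_
  calc ‖e x‖ ^ (2:ℝ) = κ / c * (c * (κ⁻¹ * ‖e x‖ ^ 2)) := by
        rw [Real.rpow_two]; field_simp
    _ ≤ κ / c * (v x * Q (e x)) := by gcongr; linarith

theorem lintegral_enorm_le_of_le_weight [MeasurableSpace E] [OpensMeasurableSpace E]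
    (hκ : 0 < κ) (hQ : ∀ M, κ⁻¹ * ‖M‖ ^ 2 ≤ Q M) (hc : 0 < c) (hcv : ∀ᵐ x ∂μ, c ≤ v x)
    (he : AEMeasurable e μ) :
    ∫⁻ x, ‖e x‖ₑ ∂μ ≤
      (μ univ * (ENNReal.ofReal (κ / c) * ∫⁻ x, ENNReal.ofReal (v x * Q (e x)) ∂μ)) ^
        (1/2 : ℝ) := by
  rw [ENNReal.mul_rpow_of_nonneg _ _ (by norm_num)]
  calc ∫⁻ x, ‖e x‖ₑ ∂μ ≤ (μ univ) ^ (1/2 : ℝ) * (∫⁻ x, ‖e x‖ₑ ^ (2:ℝ) ∂μ) ^ (1/2 : ℝ) :=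
        lintegral_le_sqrt_measure_univ_mul_sqrt_lintegral_sq μ he.enorm
    _ ≤ _ := by gcongr; exact lintegral_enorm_sq_le_of_le_weight hκ hQ hc hcv

variable {ψ : ℝ → ℝ} {α ε l : ℝ}

noncomputable def phaseFieldEnergy (μ : Measure X) (Q : E → ℝ) (ψ : ℝ → ℝ) (ε : ℝ) (v : X → ℝ)
    (e : X → E) : ℝ≥0∞ :=
  (∫⁻ x, ENNReal.ofReal (v x * Q (e x)) ∂μ) +
    ENNReal.ofReal ε⁻¹ * ∫⁻ x, ENNReal.ofReal (ψ (v x)) ∂μ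

theorem setLIntegral_enorm_superlevel_le [MeasurableSpace E] [OpensMeasurableSpace E]
    (hμ : μ univ ≠ ⊤) (hκ : 0 < κ) (hQ : ∀ M, κ⁻¹ * ‖M‖ ^ 2 ≤ Q M) (hl : 0 < l)
    (hv : Measurable v) (he : Measurable e) :
    ∫⁻ x in {x | l < v x}, ‖e x‖ₑ ∂μ ≤
      ENNReal.ofReal √(κ * (μ univ).toReal / l) * phaseFieldEnergy μ Q ψ ε v e ^ (1/2 : ℝ) := by
  have hS : MeasurableSet {x | l < v x} := measurableSet_lt measurable_const hv
  calc ∫⁻ x in {x | l < v x}, ‖e x‖ₑ ∂μ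
      ≤ (μ.restrict {x | l < v x} univ * (ENNReal.ofReal (κ / l) *
          ∫⁻ x in {x | l < v x}, ENNReal.ofReal (v x * Q (e x)) ∂μ)) ^ (1/2 : ℝ) :=
        lintegral_enorm_le_of_le_weight hκ hQ hl ((ae_restrict_mem hS).mono fun x hx => le_of_lt hx)
          he.aemeasurable
    _ ≤ (μ univ * (ENNReal.ofReal (κ / l) * phaseFieldEnergy μ Q ψ ε v e)) ^ (1/2 : ℝ) := by
        rw [Measure.restrict_apply_univ]
        gcongr
        · exact subset_univ _
        · exact (setLIntegral_le_lintegral _ _).trans le_self_add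
    _ = _ := by
        rw [← mul_assoc, ENNReal.mul_rpow_of_nonneg _ _ (by norm_num)]
        congr 1
        rw [Real.sqrt_eq_rpow, ← ENNReal.ofReal_rpow_of_nonneg (by positivity) (by norm_num),
          mul_comm κ, mul_div_assoc, ENNReal.ofReal_mul ENNReal.toReal_nonneg,
          ENNReal.ofReal_toReal hμ]

theorem setLIntegral_enorm_sublevel_le (hκ : 0 < κ) (hQ : ∀ M, κ⁻¹ * ‖M‖ ^ 2 ≤ Q M)
    (hψ : AntitoneOn ψ (Icc 0 1)) (hα : 0 < α) (hε : 0 < ε) (hv : Measurable v)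
    (hv' : ∀ᵐ x ∂μ, α * ε ≤ v x ∧ v x ≤ 1) (hl : l ∈ Icc 0 1) (hψl : 0 < ψ l) :
    ∫⁻ x in {x | v x ≤ l}, ‖e x‖ₑ ∂μ ≤
      ENNReal.ofReal (√κ / (2 * √(α * ψ l))) * phaseFieldEnergy μ Q ψ ε v e := by
  set S := {x | v x ≤ l}
  set C := √κ / (2 * √(α * ψ l))
  have hv01 : ∀ᵐ x ∂μ, v x ∈ Icc 0 1 :=
    hv'.mono fun x hx => ⟨(by positivity : 0 ≤ α * ε).trans hx.1, hx.2⟩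
  have hψv : AEMeasurable (fun x => ENNReal.ofReal ε⁻¹ * ENNReal.ofReal (ψ (v x))) μ :=
    (hψ.aemeasurable_comp zero_le_one hv hv01).ennreal_ofReal.const_mul _
  have hpointwise : ∀ᵐ x ∂μ.restrict S, ‖e x‖ₑ ≤
      ENNReal.ofReal C * (ENNReal.ofReal (v x * Q (e x)) +
        ENNReal.ofReal ε⁻¹ * ENNReal.ofReal (ψ (v x))) := by
    filter_upwards [ae_restrict_of_ae hv', ae_restrict_of_ae hv01,
      ae_restrict_mem (measurableSet_le hv measurable_const)] with x hx hx01 hxS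
    have hψx : ψ l ≤ ψ (v x) := hψ hx01 hl hxS
    have hQx : 0 ≤ Q (e x) := le_trans (by positivity) (hQ (e x))
    rw [← ofReal_norm, ← ENNReal.ofReal_mul (by positivity),
      ← ENNReal.ofReal_add (mul_nonneg hx01.1 hQx)
        (mul_nonneg (by positivity) (hψl.le.trans hψx)),
      ← ENNReal.ofReal_mul (by positivity)]
    exact ENNReal.ofReal_le_ofReal
      (le_sqrt_div_two_sqrt_mul_mul_add hκ hα hε hψl (hQ _) hx.1 hψx)
  calc ∫⁻ x in S, ‖e x‖ₑ ∂μ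
      ≤ ∫⁻ x in S, ENNReal.ofReal C * (ENNReal.ofReal (v x * Q (e x)) +
          ENNReal.ofReal ε⁻¹ * ENNReal.ofReal (ψ (v x))) ∂μ := lintegral_mono_ae hpointwise
    _ = ENNReal.ofReal C * ((∫⁻ x in S, ENNReal.ofReal (v x * Q (e x)) ∂μ) +
          ∫⁻ x in S, ENNReal.ofReal ε⁻¹ * ENNReal.ofReal (ψ (v x)) ∂μ) := by
        rw [lintegral_const_mul' _ _ ENNReal.ofReal_ne_top, lintegral_add_right' _ hψv.restrict]
    _ ≤ ENNReal.ofReal C * phaseFieldEnergy μ Q ψ ε v e := by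
        rw [phaseFieldEnergy, ← lintegral_const_mul' _ _ ENNReal.ofReal_ne_top]
        gcongr _ * (?_ + ?_) <;> exact setLIntegral_le_lintegral _ _

theorem integrable_norm_of_phaseFieldEnergy_ne_top [MeasurableSpace E] [OpensMeasurableSpace E]
    (hμ : μ univ ≠ ⊤) (hκ : 0 < κ) (hQ : ∀ M, κ⁻¹ * ‖M‖ ^ 2 ≤ Q M) (hc : 0 < c)
    (hcv : ∀ᵐ x ∂μ, c ≤ v x) (he : Measurable e) (hW : phaseFieldEnergy μ Q ψ ε v e ≠ ⊤) :
    Integrable (fun x => ‖e x‖) μ := by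
  refine ⟨he.norm.aestronglyMeasurable, ?_⟩
  simp only [HasFiniteIntegral, enorm_norm]
  refine (lintegral_enorm_le_of_le_weight hκ hQ hc hcv he.aemeasurable).trans_lt ?_
  have hI : ∫⁻ x, ENNReal.ofReal (v x * Q (e x)) ∂μ ≠ ⊤ := ne_top_of_le_ne_top hW le_self_add
  exact ENNReal.rpow_lt_top_of_nonneg (by norm_num) (by finiteness)

end

theorem stmt_7_general {n : ℕ} (Ω : Set (EuclideanSpace ℝ (Fin n)))
    (hΩfin : volume Ω ≠ ⊤)
    {E : Type*} [NormedAddCommGroup E]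
    [MeasurableSpace E] [BorelSpace E]
    (κ : ℝ) (hκ : 1 ≤ κ)
    (Q : E → ℝ) (hQ : ∀ M : E, κ⁻¹ * ‖M‖ ^ 2 ≤ Q M ∧ Q M ≤ κ * ‖M‖ ^ 2)
    (ψ : ℝ → ℝ) (hψmono : AntitoneOn ψ (Icc 0 1))
    (α ε : ℝ) (hα : 0 < α) (hε : 0 < ε)
    (v : EuclideanSpace ℝ (Fin n) → ℝ) (hv : Measurable v)
    (hv' : ∀ᵐ x ∂(volume.restrict Ω), α * ε ≤ v x ∧ v x ≤ 1)
    (e : EuclideanSpace ℝ (Fin n) → E) (he : Measurable e)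
    (W : ℝ≥0∞)
    (hW : W = (∫⁻ x in Ω, ENNReal.ofReal (v x * Q (e x)))
        + ENNReal.ofReal ε⁻¹ * ∫⁻ x in Ω, ENNReal.ofReal (ψ (v x))) :
    (∀ l ∈ Ioo (0:ℝ) 1, 0 < ψ l →
      (∫⁻ x in Ω, (‖e x‖₊ : ℝ≥0∞))
        ≤ ENNReal.ofReal (Real.sqrt (κ * (volume Ω).toReal / l)) * W ^ (1/2 : ℝ)
          + ENNReal.ofReal (Real.sqrt κ / (2 * Real.sqrt (α * ψ l))) * W)
    ∧ (W ≠ ⊤ → IntegrableOn (fun x => ‖e x‖) Ω) := by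
  have hκ0 : 0 < κ := zero_lt_one.trans_le hκ
  have hQ' : ∀ M, κ⁻¹ * ‖M‖ ^ 2 ≤ Q M := fun M => (hQ M).1
  have hμ : volume.restrict Ω univ = volume Ω := Measure.restrict_apply_univ Ω
  change W = phaseFieldEnergy (volume.restrict Ω) Q ψ ε v e at hW
  subst hW
  refine ⟨fun l hl hψl => ?_, fun hWfin => ?_⟩
  · simp only [← enorm_eq_nnnorm, ← hμ]
    rw [← lintegral_add_compl _ (measurableSet_lt measurable_const hv), compl_ofPred]
    simp only [not_lt]
    exact add_le_add (setLIntegral_enorm_superlevel_le (hμ ▸ hΩfin) hκ0 hQ' hl.1 hv he)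
      (setLIntegral_enorm_sublevel_le hκ0 hQ' hψmono hα hε hv hv' (Ioo_subset_Icc_self hl) hψl)
  · exact integrable_norm_of_phaseFieldEnergy_ne_top (hμ ▸ hΩfin) hκ0 hQ' (mul_pos hα hε)
      (hv'.mono fun x hx => hx.1) he hWfin

theorem stmt_7 {n : ℕ} (Ω : Set (EuclideanSpace ℝ (Fin n)))
    (hΩm : MeasurableSet Ω) (hΩpos : 0 < volume Ω) (hΩfin : volume Ω ≠ ⊤)
    {E : Type*} [NormedAddCommGroup E] [NormedSpace ℝ E] [FiniteDimensional ℝ E]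
    [MeasurableSpace E] [BorelSpace E]
    (κ : ℝ) (hκ : 1 ≤ κ)
    (Q : E → ℝ) (hQ : ∀ M : E, κ⁻¹ * ‖M‖ ^ 2 ≤ Q M ∧ Q M ≤ κ * ‖M‖ ^ 2)
    (ψ : ℝ → ℝ) (hψmono : AntitoneOn ψ (Icc 0 1)) (hψ1 : ψ 1 = 0)
    (hψnn : ∀ t ∈ Icc (0:ℝ) 1, 0 ≤ ψ t)
    (α ε : ℝ) (hα : 0 < α) (hε : 0 < ε) (hαε : α * ε ≤ 1)
    (v : EuclideanSpace ℝ (Fin n) → ℝ) (hv : Measurable v)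
    (hv' : ∀ᵐ x ∂(volume.restrict Ω), α * ε ≤ v x ∧ v x ≤ 1)
    (e : EuclideanSpace ℝ (Fin n) → E) (he : Measurable e)
    (W : ℝ≥0∞)
    (hW : W = (∫⁻ x in Ω, ENNReal.ofReal (v x * Q (e x)))
        + ENNReal.ofReal ε⁻¹ * ∫⁻ x in Ω, ENNReal.ofReal (ψ (v x))) :
    (∀ l ∈ Ioo (0:ℝ) 1, 0 < ψ l →
      (∫⁻ x in Ω, (‖e x‖₊ : ℝ≥0∞))
        ≤ ENNReal.ofReal (Real.sqrt (κ * (volume Ω).toReal / l)) * W ^ (1/2 : ℝ)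
          + ENNReal.ofReal (Real.sqrt κ / (2 * Real.sqrt (α * ψ l))) * W)
    ∧ (W ≠ ⊤ → IntegrableOn (fun x => ‖e x‖) Ω) :=
  stmt_7_general Ω hΩfin κ hκ Q hQ ψ hψmono α ε hα hε v hv hv' e he W hW
end

section
/- Let g : ℝ → ℝ be convex on [0, ∞) with g(t) ≤ ℓ·t for all t ≥ 0, where ℓ ≥ 0. Then g_∞ := lim_{t → +∞} g(t)/t exists, is finite, and satisfies g_∞ ≤ ℓ. Moreover, for every real normed space E and every L, M ∈ E, lim_{t → +∞} ( g(‖L + t·M‖) − g(‖L‖) ) / t = g_∞ · ‖M‖. -/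
/-!
Along the ray `[1, ∞)` the secant slope `(g t - g 0) / t` of the convex function `g` is
monotone and, by `g ≤ ℓ t`, bounded by `ℓ - g 0`; hence it converges, and so does `g t / t`, to
some `g_∞ ≤ ℓ`. Since `‖L + t • M‖ / t → ‖M‖`, for `M ≠ 0` the argument `‖L + t • M‖` tends to
infinity and `g ‖L + t • M‖ / t = (g a / a) (a / t)` with `a = ‖L + t • M‖` tends to `g_∞ ‖M‖`.
-/

open Filter Set Topology

theorem MonotoneOn.exists_tendsto_atTop_of_bddAbove {α β : Type*} [LinearOrder α]
    [ConditionallyCompleteLinearOrder β] [TopologicalSpace β] [OrderTopology β] {f : α → β} {a : α}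
    (hf : MonotoneOn f (Ici a)) (hb : BddAbove (f '' Ici a)) :
    ∃ c, Tendsto f atTop (𝓝 c) := by
  have hmono : Monotone fun t => f (max t a) := fun s t hst =>
    hf (le_max_right s a) (le_max_right t a) (max_le_max_right a hst)
  have hbdd : BddAbove (range fun t => f (max t a)) :=
    hb.mono (range_subset_iff.2 fun t => mem_image_of_mem f le_sup_right)
  refine ⟨_, (tendsto_atTop_ciSup hmono hbdd).congr' ?_⟩
  filter_upwards [eventually_ge_atTop a] with t ht
  rw [max_eq_left ht]

theorem ConvexOn.exists_tendsto_div_atTop_of_le_mul {g : ℝ → ℝ} {ℓ : ℝ}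
    (hg : ConvexOn ℝ (Ici 0) g) (hle : ∀ t, 0 ≤ t → g t ≤ ℓ * t) :
    ∃ c, Tendsto (fun t => g t / t) atTop (𝓝 c) ∧ c ≤ ℓ := by
  have hmono : MonotoneOn (slope g 0) (Ici 1) :=
    (hg.slope_mono self_mem_Ici).mono fun t (ht : 1 ≤ t) =>
      ⟨le_trans zero_le_one ht, by simp only [mem_singleton_iff]; linarith⟩
  have hbdd : BddAbove (slope g 0 '' Ici 1) := by
    refine ⟨ℓ - g 0, forall_mem_image.2 fun t (ht : 1 ≤ t) => ?_⟩
    have hg0 : g 0 ≤ 0 := by simpa using hle 0 le_rfl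
    have ht0 : 0 < t := by linarith
    rw [slope_def_field, sub_zero, div_le_iff₀ ht0]
    nlinarith [hle t ht0.le]
  obtain ⟨c, hc⟩ := hmono.exists_tendsto_atTop_of_bddAbove hbdd
  have hdiv : Tendsto (fun t => g t / t) atTop (𝓝 c) := by
    have := hc.add (tendsto_const_nhds (x := g 0).div_atTop tendsto_id)
    rw [add_zero] at this
    refine this.congr' ?_
    filter_upwards [eventually_ne_atTop 0] with t ht
    rw [slope_def_field, sub_zero, id, ← add_div, sub_add_cancel]
  refine ⟨c, hdiv, le_of_tendsto hdiv ?_⟩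
  filter_upwards [eventually_gt_atTop 0] with t ht
  rw [div_le_iff₀ ht]
  exact hle t ht.le

theorem tendsto_norm_add_smul_div_atTop {E : Type*} [NormedAddCommGroup E] [NormedSpace ℝ E]
    (L M : E) : Tendsto (fun t : ℝ => ‖L + t • M‖ / t) atTop (𝓝 ‖M‖) := by
  have h : Tendsto (fun t : ℝ => ‖t⁻¹ • L + M‖) atTop (𝓝 ‖(0 : ℝ) • L + M‖) :=
    ((tendsto_inv_atTop_zero.smul_const L).add_const M).norm
  rw [zero_smul, zero_add] at h
  refine h.congr' ?_
  filter_upwards [eventually_gt_atTop 0] with t ht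
  rw [show t⁻¹ • L + M = t⁻¹ • (L + t • M) by
      rw [smul_add, smul_smul, inv_mul_cancel₀ ht.ne', one_smul],
    norm_smul, Real.norm_of_nonneg (inv_nonneg.2 ht.le), inv_mul_eq_div]

theorem tendsto_comp_div_atTop {g a : ℝ → ℝ} {c m : ℝ}
    (hg : Tendsto (fun x => g x / x) atTop (𝓝 c)) (ha : Tendsto (fun t => a t / t) atTop (𝓝 m))
    (hm : 0 < m) : Tendsto (fun t => g (a t) / t) atTop (𝓝 (c * m)) := by
  have ha_top : Tendsto a atTop atTop :=
    (ha.pos_mul_atTop hm tendsto_id).congr' <| by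
      filter_upwards [eventually_ne_atTop 0] with t ht
      exact div_mul_cancel₀ (a t) ht
  refine ((hg.comp ha_top).mul ha).congr' ?_
  filter_upwards [ha_top.eventually_ne_atTop 0] with t ht
  exact div_mul_div_cancel₀ ht

theorem tendsto_sub_comp_norm_add_smul_div_atTop {E : Type*} [NormedAddCommGroup E]
    [NormedSpace ℝ E] {g : ℝ → ℝ} {c : ℝ} (hg : Tendsto (fun x => g x / x) atTop (𝓝 c))
    (L M : E) :
    Tendsto (fun t : ℝ => (g ‖L + t • M‖ - g ‖L‖) / t) atTop (𝓝 (c * ‖M‖)) := by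
  rcases eq_or_ne M 0 with rfl | hM
  · simp
  have h := (tendsto_comp_div_atTop hg (tendsto_norm_add_smul_div_atTop L M)
    (norm_pos_iff.2 hM)).sub (tendsto_const_nhds (x := g ‖L‖).div_atTop tendsto_id)
  rw [sub_zero] at h
  simpa only [id, sub_div] using h

theorem stmt_10_general (g : ℝ → ℝ) (ℓ : ℝ)
    (hconv : ConvexOn ℝ (Set.Ici 0) g)
    (hle : ∀ t : ℝ, 0 ≤ t → g t ≤ ℓ * t)
    (E : Type*) [NormedAddCommGroup E] [NormedSpace ℝ E] (L M : E) :
    ∃ ginf : ℝ,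
      Filter.Tendsto (fun t : ℝ => g t / t) Filter.atTop (nhds ginf) ∧
      ginf ≤ ℓ ∧
      Filter.Tendsto (fun t : ℝ => (g ‖L + t • M‖ - g ‖L‖) / t) Filter.atTop
        (nhds (ginf * ‖M‖)) := by
  obtain ⟨c, hc, hcℓ⟩ := hconv.exists_tendsto_div_atTop_of_le_mul hle
  exact ⟨c, hc, hcℓ, tendsto_sub_comp_norm_add_smul_div_atTop hc L M⟩

theorem stmt_10 (g : ℝ → ℝ) (ℓ : ℝ) (hℓ : 0 ≤ ℓ)
    (hconv : ConvexOn ℝ (Set.Ici 0) g)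
    (hle : ∀ t : ℝ, 0 ≤ t → g t ≤ ℓ * t)
    (E : Type*) [NormedAddCommGroup E] [NormedSpace ℝ E] (L M : E) :
    ∃ ginf : ℝ,
      Filter.Tendsto (fun t : ℝ => g t / t) Filter.atTop (nhds ginf) ∧
      ginf ≤ ℓ ∧
      Filter.Tendsto (fun t : ℝ => (g ‖L + t • M‖ - g ‖L‖) / t) Filter.atTop
        (nhds (ginf * ‖M‖)) :=
  stmt_10_general g ℓ hconv hle E L M
end

section
/- Let ψ : [0,1] → [0,∞) be nonincreasing with ψ(0) > 0 and ψ(1) = 0, and let α > 0, κ > 0, m > 0. Then sup_{λ ∈ (0,1)} [ 2·√(α·ψ(λ)) / ( √κ · (1 + 2·√(α·m·ψ(λ)/λ)) ) ] < 2·√( α·ψ(0) / κ ). -/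
theorem stmt_12 (ψ : ℝ → ℝ) (hψmono : AntitoneOn ψ (Set.Icc 0 1))
    (hψ0 : 0 < ψ 0) (hψ1 : ψ 1 = 0)
    (hψnn : ∀ t ∈ Set.Icc (0:ℝ) 1, 0 ≤ ψ t)
    (α κ m : ℝ) (hα : 0 < α) (hκ : 0 < κ) (hm : 0 < m) :
    (⨆ l : Set.Ioo (0:ℝ) 1,
        2 * Real.sqrt (α * ψ l) /
          (Real.sqrt κ * (1 + 2 * Real.sqrt (α * m * ψ l / l))))
      < 2 * Real.sqrt (α * ψ 0 / κ) := by
  set b := Real.sqrt (α * ψ 0) with hb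
  have hbpos : 0 < b := Real.sqrt_pos.mpr (by positivity)
  have hsm : 0 < Real.sqrt m := Real.sqrt_pos.mpr hm
  have hsκ : 0 < Real.sqrt κ := Real.sqrt_pos.mpr hκ
  set B := 2 * b / (Real.sqrt κ * (1 + 2 * (Real.sqrt m * b))) with hB
  have hden : 0 < Real.sqrt κ * (1 + 2 * (Real.sqrt m * b)) := by positivity
  have hne : Nonempty (Set.Ioo (0:ℝ) 1) := ⟨⟨1/2, by norm_num, by norm_num⟩⟩
  have hsup : (⨆ l : Set.Ioo (0:ℝ) 1,
        2 * Real.sqrt (α * ψ l) /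
          (Real.sqrt κ * (1 + 2 * Real.sqrt (α * m * ψ l / l)))) ≤ B := by
    apply ciSup_le
    rintro ⟨l, hl0, hl1⟩
    simp only
    have hlmem : l ∈ Set.Icc (0:ℝ) 1 := ⟨le_of_lt hl0, le_of_lt hl1⟩
    have hψl : 0 ≤ ψ l := hψnn l hlmem
    have hψle : ψ l ≤ ψ 0 := hψmono ⟨le_refl 0, zero_le_one⟩ hlmem (le_of_lt hl0)
    set a := Real.sqrt (α * ψ l) with ha
    have hapos : 0 ≤ a := Real.sqrt_nonneg _
    have hab : a ≤ b := Real.sqrt_le_sqrt (by nlinarith)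
    -- √(α m ψ l / l) ≥ √m * a
    have hkey : Real.sqrt m * a ≤ Real.sqrt (α * m * ψ l / l) := by
      rw [ha, ← Real.sqrt_mul hm.le]
      apply Real.sqrt_le_sqrt
      rw [le_div_iff₀ hl0]
      nlinarith [mul_nonneg (mul_nonneg hα.le hm.le) hψl]
    have hden1 : 0 < Real.sqrt κ * (1 + 2 * Real.sqrt (α * m * ψ l / l)) := by
      have := Real.sqrt_nonneg (α * m * ψ l / l)
      positivity
    have hden2 : 0 < Real.sqrt κ * (1 + 2 * (Real.sqrt m * a)) := by positivity
    have step1 : 2 * a / (Real.sqrt κ * (1 + 2 * Real.sqrt (α * m * ψ l / l)))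
        ≤ 2 * a / (Real.sqrt κ * (1 + 2 * (Real.sqrt m * a))) := by
      apply div_le_div_of_nonneg_left (by positivity) hden2
      have : Real.sqrt m * a ≤ Real.sqrt (α * m * ψ l / l) := hkey
      nlinarith
    have step2 : 2 * a / (Real.sqrt κ * (1 + 2 * (Real.sqrt m * a))) ≤ B := by
      rw [hB, div_le_div_iff₀ hden2 hden]
      nlinarith [mul_nonneg hsm.le hapos, mul_nonneg hsm.le hbpos.le]
    exact le_trans step1 step2
  refine lt_of_le_of_lt hsup ?_
  have hrhs : Real.sqrt (α * ψ 0 / κ) = b / Real.sqrt κ := by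
    rw [hb]; exact Real.sqrt_div (by positivity) κ
  rw [hrhs, hB, ← mul_div_assoc, div_lt_div_iff₀ hden hsκ]
  have h1 : 0 < Real.sqrt m * b := by positivity
  nlinarith [mul_pos (mul_pos hbpos hsκ) h1]
end
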